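/- Let f_1, …, f_N : ℝⁿ → ℝⁿ be continuous vector fields. Assume there exist a continuously differentiable function V : ℝⁿ → ℝ, a compact set B ⊆ ℝⁿ, and constants γ ∈ ℝ, ρ > 0 such that V(x) = γ for all x on the topological boundary of B, V(x) > γ for all x ∈ ℝⁿ \ B, and ∇V(x) · f_i(x) ≤ -ρ for all x ∈ ℝⁿ \ B and all i = 1, …, N. Then for every solution x of the switched system with x(0) = x₀ ∉ B there exists a time t* with 0 ≤ t* ≤ (V(x₀) - γ)/ρ such that x(t) ∈ B for all t ≥ t*. -/

import Mathlib

/-- A solution of the switched system determined by the vector fields `f i` on `ℝⁿ`: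
a function differentiable on `[0,∞)` such that at every time `t ≥ 0` its derivative
(within `[0,∞)`) is given by one of the vector fields (arbitrary switching). -/
def IsSwitchedSolution {n N : ℕ}
    (f : Fin N → EuclideanSpace ℝ (Fin n) → EuclideanSpace ℝ (Fin n))
    (x : ℝ → EuclideanSpace ℝ (Fin n)) : Prop :=
  ∀ t : ℝ, 0 ≤ t → ∃ i : Fin N, HasDerivWithinAt x (f i (x t)) (Set.Ici 0) t

/-!
Along any solution, `t ↦ V (x t) + ρ t` is nonincreasing as long as the solution stays outside
`B`, by the mean value theorem. Starting at `x₀ ∉ B`, if the solution avoided `B` up to time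
`T = (V x₀ - γ) / ρ` we would get `V (x T) ≤ γ`, contradicting `V > γ` off `B`; so it meets `B`
by time `T`. It can never leave `B` again: at the last time `u` it is in `B` before some exit it
sits on the frontier, where `V = γ`, and afterwards `V` decreases, again forcing `V ≤ γ` off `B`.
-/

open Set

theorem comp_sub_le_of_hasDerivAt_fderiv_le {E : Type*} [NormedAddCommGroup E]
    [NormedSpace ℝ E] {V : E → ℝ} {x : ℝ → E} {a b ρ : ℝ} (hV : Differentiable ℝ V)
    (hx : ContinuousOn x (Icc a b)) (hab : a ≤ b)
    (hdx : ∀ t ∈ Ioo a b, ∃ v, HasDerivAt x v t ∧ fderiv ℝ V (x t) v ≤ -ρ) :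
    V (x b) - V (x a) ≤ -ρ * (b - a) := by
  have hderiv : ∀ t ∈ Ioo a b, ∃ d ≤ -ρ, HasDerivAt (V ∘ x) d t := by
    intro t ht
    obtain ⟨v, hxv, hle⟩ := hdx t ht
    exact ⟨_, hle, (hV (x t)).hasFDerivAt.comp_hasDerivAt t hxv⟩
  have hdiff : DifferentiableOn ℝ (V ∘ x) (interior (Icc a b)) := by
    rw [interior_Icc]
    intro t ht
    obtain ⟨d, -, hd⟩ := hderiv t ht
    exact hd.differentiableAt.differentiableWithinAt
  have hderiv_le : ∀ t ∈ interior (Icc a b), deriv (V ∘ x) t ≤ -ρ := by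
    rw [interior_Icc]
    intro t ht
    obtain ⟨d, hle, hd⟩ := hderiv t ht
    exact hd.deriv ▸ hle
  exact (convex_Icc a b).image_sub_le_mul_sub_of_deriv_le (hV.continuous.comp_continuousOn hx)
    hdiff hderiv_le a (left_mem_Icc.2 hab) b (right_mem_Icc.2 hab) hab

theorem ContinuousOn.exists_last_mem_frontier {X : Type*} [TopologicalSpace X] {x : ℝ → X}
    {B : Set X} {a b : ℝ} (hx : ContinuousOn x (Icc a b)) (hB : IsClosed B) (hab : a ≤ b)
    (ha : x a ∈ B) (hb : x b ∉ B) :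
    ∃ u ∈ Ico a b, x u ∈ frontier B ∧ ∀ t ∈ Ioc u b, x t ∉ B := by
  set S := Icc a b ∩ x ⁻¹' B
  have hSbdd : BddAbove S := ⟨b, fun t ht => ht.1.2⟩
  have huS : sSup S ∈ S := (hx.preimage_isClosed_of_isClosed isClosed_Icc hB).csSup_mem
    ⟨a, left_mem_Icc.2 hab, ha⟩ hSbdd
  set u := sSup S
  have hub : u < b := lt_of_le_of_ne huS.1.2 fun h => hb (h ▸ huS.2)
  have hafter : ∀ t ∈ Ioc u b, x t ∉ B := fun t ht htB =>
    (le_csSup hSbdd ⟨⟨huS.1.1.trans ht.1.le, ht.2⟩, htB⟩).not_gt ht.1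
  refine ⟨u, ⟨huS.1.1, hub⟩, ?_, hafter⟩
  have hcont : ContinuousWithinAt x (Ioc u b) u :=
    (hx u huS.1).mono fun t ht => ⟨huS.1.1.trans ht.1.le, ht.2⟩
  have hu_closure : x u ∈ closure (x '' Ioc u b) :=
    hcont.mem_closure_image (by rw [closure_Ioc hub.ne]; exact left_mem_Icc.2 hub.le)
  rw [frontier_eq_closure_inter_closure]
  have himage : x '' Ioc u b ⊆ Bᶜ := image_subset_iff.2 fun t ht => hafter t ht
  exact ⟨subset_closure huS.2, closure_mono himage hu_closure⟩

namespace IsSwitchedSolution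

variable {n N : ℕ} {f : Fin N → EuclideanSpace ℝ (Fin n) → EuclideanSpace ℝ (Fin n)}
  {x : ℝ → EuclideanSpace ℝ (Fin n)} {V : EuclideanSpace ℝ (Fin n) → ℝ}
  {B : Set (EuclideanSpace ℝ (Fin n))} {γ ρ : ℝ}

theorem continuousOn (hx : IsSwitchedSolution f x) : ContinuousOn x (Ici 0) := fun t ht =>
  (hx t ht).choose_spec.continuousWithinAt

theorem lyapunov_sub_le (hx : IsSwitchedSolution f x) (hV : Differentiable ℝ V)
    (hdec : ∀ y ∉ B, ∀ i, fderiv ℝ V y (f i y) ≤ -ρ) {a b : ℝ} (ha : 0 ≤ a) (hab : a ≤ b)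
    (hout : ∀ t ∈ Ioo a b, x t ∉ B) : V (x b) - V (x a) ≤ -ρ * (b - a) := by
  refine comp_sub_le_of_hasDerivAt_fderiv_le hV
    (hx.continuousOn.mono fun t ht => ha.trans ht.1) hab fun t ht => ?_
  have ht0 : 0 < t := ha.trans_lt ht.1
  obtain ⟨i, hxi⟩ := hx t ht0.le
  exact ⟨_, hxi.hasDerivAt (Ici_mem_nhds ht0), hdec _ (hout t ht) i⟩

theorem mem_of_mem_of_le (hx : IsSwitchedSolution f x) (hV : Differentiable ℝ V)
    (hB : IsClosed B) (hρ : 0 ≤ ρ) (hbd : ∀ y ∈ frontier B, V y ≤ γ)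
    (hgt : ∀ y ∉ B, γ < V y) (hdec : ∀ y ∉ B, ∀ i, fderiv ℝ V y (f i y) ≤ -ρ)
    {t₀ s : ℝ} (ht₀ : 0 ≤ t₀) (hmem : x t₀ ∈ B) (hs : t₀ ≤ s) : x s ∈ B := by
  by_contra hsB
  obtain ⟨u, hu, hu_frontier, hafter⟩ :=
    (hx.continuousOn.mono fun t ht => ht₀.trans ht.1).exists_last_mem_frontier hB hs hmem hsB
  have hdecrease := hx.lyapunov_sub_le hV hdec (ht₀.trans hu.1) hu.2.le
    fun t ht => hafter t ⟨ht.1, ht.2.le⟩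
  linarith [hbd _ hu_frontier, hgt _ hsB, mul_nonneg hρ (sub_nonneg.2 hu.2.le)]

theorem exists_mem_of_lyapunov (hx : IsSwitchedSolution f x) (hV : Differentiable ℝ V)
    (hρ : 0 < ρ) (hgt : ∀ y ∉ B, γ < V y) (hdec : ∀ y ∉ B, ∀ i, fderiv ℝ V y (f i y) ≤ -ρ)
    (hx0 : x 0 ∉ B) : ∃ t ∈ Icc 0 ((V (x 0) - γ) / ρ), x t ∈ B := by
  set T := (V (x 0) - γ) / ρ
  have hT : 0 ≤ T := div_nonneg (sub_nonneg.2 (hgt _ hx0).le) hρ.le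
  have hρT : ρ * T = V (x 0) - γ := mul_div_cancel₀ _ hρ.ne'
  by_contra! hout
  have hdecrease := hx.lyapunov_sub_le hV hdec le_rfl hT
    fun t ht => hout t (Ioo_subset_Icc_self ht)
  linarith [hgt _ (hout T (right_mem_Icc.2 hT))]

end IsSwitchedSolution

theorem enters_absorbing_set_of_lyapunov_general {n N : ℕ}
    (f : Fin N → EuclideanSpace ℝ (Fin n) → EuclideanSpace ℝ (Fin n))
    (V : EuclideanSpace ℝ (Fin n) → ℝ) (hV : ContDiff ℝ 1 V)
    (B : Set (EuclideanSpace ℝ (Fin n))) (hB : IsCompact B)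
    (γ ρ : ℝ) (hρ : 0 < ρ)
    (hbd : ∀ x ∈ frontier B, V x = γ)
    (hgt : ∀ x ∉ B, V x > γ)
    (hdec : ∀ x ∉ B, ∀ i : Fin N, fderiv ℝ V x (f i x) ≤ -ρ)
    (x : ℝ → EuclideanSpace ℝ (Fin n)) (hx : IsSwitchedSolution f x)
    (x₀ : EuclideanSpace ℝ (Fin n)) (hx0 : x 0 = x₀) (hx0B : x₀ ∉ B) :
    ∃ tstar : ℝ, 0 ≤ tstar ∧ tstar ≤ (V x₀ - γ) / ρ ∧
      ∀ t : ℝ, tstar ≤ t → x t ∈ B := by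
  subst hx0
  have hVd : Differentiable ℝ V := hV.differentiable one_ne_zero
  obtain ⟨tstar, ⟨htstar0, htstarT⟩, hmem⟩ := hx.exists_mem_of_lyapunov hVd hρ hgt hdec hx0B
  exact ⟨tstar, htstar0, htstarT, fun t ht => hx.mem_of_mem_of_le hVd hB.isClosed hρ.le
    (fun y hy => (hbd y hy).le) hgt hdec htstar0 hmem ht⟩

/-- Under the Lyapunov-type conditions, any solution starting at `x₀ ∉ B` enters `B`
no later than time `(V(x₀) - γ)/ρ` and stays in `B` afterwards. -/
theorem enters_absorbing_set_of_lyapunov {n N : ℕ}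
    (f : Fin N → EuclideanSpace ℝ (Fin n) → EuclideanSpace ℝ (Fin n))
    (hf : ∀ i, Continuous (f i))
    (V : EuclideanSpace ℝ (Fin n) → ℝ) (hV : ContDiff ℝ 1 V)
    (B : Set (EuclideanSpace ℝ (Fin n))) (hB : IsCompact B)
    (γ ρ : ℝ) (hρ : 0 < ρ)
    (hbd : ∀ x ∈ frontier B, V x = γ)
    (hgt : ∀ x ∉ B, V x > γ)
    (hdec : ∀ x ∉ B, ∀ i : Fin N, fderiv ℝ V x (f i x) ≤ -ρ)
    (x : ℝ → EuclideanSpace ℝ (Fin n)) (hx : IsSwitchedSolution f x)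
    (x₀ : EuclideanSpace ℝ (Fin n)) (hx0 : x 0 = x₀) (hx0B : x₀ ∉ B) :
    ∃ tstar : ℝ, 0 ≤ tstar ∧ tstar ≤ (V x₀ - γ) / ρ ∧
      ∀ t : ℝ, tstar ≤ t → x t ∈ B :=
  enters_absorbing_set_of_lyapunov_general f V hV B hB γ ρ hρ hbd hgt hdec x hx x₀ hx0 hx0B
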